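/- Assume (AL) and (AG); let ψ_j(x) = σ(a_jᵀx + b_j) for j = 1,…,N_d, with σ twice differentiable, σ' > 0 everywhere, and σ, σ', σ'' bounded; let X be any random vector in ℝ^n. Then for every pair of finite signed Borel measures θ, μ on ℝ^p, the function λ ↦ J(θ + λμ) is differentiable on ℝ and its derivative at λ = 0 equals −E_Z[Σ_{j=1}^{N_d} r_j(θ) ∇ψ_j(g_θ(Z))ᵀ g_μ(Z)]. -/

import Mathlib

/-!
Along the line `θ + λ • μ` the generator is affine, `g_{θ + λμ} = g_θ + λ g_μ`: the integral
`sInt` against a signed measure does not depend on how the measure is written as a difference of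
finite measures, hence is additive and homogeneous in the measure. So
`J(θ + λμ) = ½ ‖E Ψ(X) - ∫ q_Z(z) Ψ(g_θ z + λ g_μ z) dz‖²`. The features `Ψ` are bounded with
bounded continuous derivative and `g_θ`, `g_μ` are bounded and continuous, so the `z`-integral can
be differentiated under the integral sign with an integrable dominating function `C · |q_Z|`; the
chain rule for `½ ‖·‖²` then gives the derivative.
-/

open MeasureTheory Filter
open scoped RealInnerProductSpace

noncomputable section

/-- Parameter space ℝ^p with p = nk + n: a pair (κ_w, κ_b). -/
abbrev Par (n k : ℕ) : Type := (Fin n → Fin k → ℝ) × (Fin n → ℝ)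

/-- Integral of a vector-valued function against a finite signed Borel measure,
via the Jordan decomposition. -/
noncomputable def sInt {α : Type*} [MeasurableSpace α] (θ : MeasureTheory.SignedMeasure α)
    {E : Type*} [NormedAddCommGroup E] [NormedSpace ℝ E] (f : α → E) : E :=
  (∫ x, f x ∂θ.toJordanDecomposition.posPart) -
    ∫ x, f x ∂θ.toJordanDecomposition.negPart

/-- Generator feature function φ(z; κ) = σ_g(κ_w z + κ_b), σ_g applied entrywise. -/
noncomputable def phi (n k : ℕ) (σg : ℝ → ℝ) (κ : Par n k)
    (z : EuclideanSpace ℝ (Fin k)) : EuclideanSpace ℝ (Fin n) :=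
  WithLp.toLp 2 (fun i => σg ((∑ j, κ.1 i j * z j) + κ.2 i))

/-- Infinite-width generator g_θ(z) = ∫ φ(z; κ) dθ(κ). -/
noncomputable def gen (n k : ℕ) (σg : ℝ → ℝ) (θ : MeasureTheory.SignedMeasure (Par n k))
    (z : EuclideanSpace ℝ (Fin k)) : EuclideanSpace ℝ (Fin n) :=
  sInt θ (fun κ => phi n k σg κ z)

/-- Discriminator features Ψ(x) = (σ(a_jᵀx + b_j))_{j=1}^{N_d}. -/
noncomputable def Psi (n Nd : ℕ) (σ : ℝ → ℝ) (a : Fin Nd → EuclideanSpace ℝ (Fin n))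
    (b : Fin Nd → ℝ) (x : EuclideanSpace ℝ (Fin n)) : EuclideanSpace ℝ (Fin Nd) :=
  WithLp.toLp 2 (fun j => σ ((∑ i, a j i * x i) + b j))

/-- Gradient ∇ψ_j(x) = σ'(a_jᵀx + b_j) a_j. -/
noncomputable def gradPsi (n Nd : ℕ) (σ : ℝ → ℝ) (a : Fin Nd → EuclideanSpace ℝ (Fin n))
    (b : Fin Nd → ℝ) (j : Fin Nd) (x : EuclideanSpace ℝ (Fin n)) :
    EuclideanSpace ℝ (Fin n) :=
  deriv σ ((∑ i, a j i * x i) + b j) • a j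

/-- Residual r(θ) = E[Ψ(X)] − E[Ψ(g_θ(Z))], where Z has density q_Z. -/
noncomputable def resid (n k Nd : ℕ) (σg σ : ℝ → ℝ)
    (a : Fin Nd → EuclideanSpace ℝ (Fin n)) (b : Fin Nd → ℝ)
    (PX : Measure (EuclideanSpace ℝ (Fin n)))
    (qZ : EuclideanSpace ℝ (Fin k) → ℝ)
    (θ : MeasureTheory.SignedMeasure (Par n k)) : EuclideanSpace ℝ (Fin Nd) :=
  (∫ x, Psi n Nd σ a b x ∂PX) -
    ∫ z, qZ z • Psi n Nd σ a b (gen n k σg θ z)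

/-- Loss J(θ) = (1/2)‖r(θ)‖₂². -/
noncomputable def Jloss (n k Nd : ℕ) (σg σ : ℝ → ℝ)
    (a : Fin Nd → EuclideanSpace ℝ (Fin n)) (b : Fin Nd → ℝ)
    (PX : Measure (EuclideanSpace ℝ (Fin n)))
    (qZ : EuclideanSpace ℝ (Fin k) → ℝ)
    (θ : MeasureTheory.SignedMeasure (Par n k)) : ℝ :=
  (1 / 2) * ‖resid n k Nd σg σ a b PX qZ θ‖ ^ 2


section SignedIntegral

variable {α : Type*} [MeasurableSpace α] {E : Type*} [NormedAddCommGroup E] [NormedSpace ℝ E]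

theorem sInt_eq_integral_sub_integral {s : SignedMeasure α} (ν₁ ν₂ : Measure α)
    [IsFiniteMeasure ν₁] [IsFiniteMeasure ν₂]
    (hs : s = ν₁.toSignedMeasure - ν₂.toSignedMeasure) {f : α → E} (hf : StronglyMeasurable f)
    {C : ℝ} (hfC : ∀ x, ‖f x‖ ≤ C) :
    sInt s f = (∫ x, f x ∂ν₁) - ∫ x, f x ∂ν₂ := by
  set P := s.toJordanDecomposition.posPart
  set N := s.toJordanDecomposition.negPart
  have hint (ν : Measure α) [IsFiniteMeasure ν] : Integrable f ν :=
    .of_bound hf.aestronglyMeasurable C (.of_forall hfC)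
  have hPN : P.toSignedMeasure - N.toSignedMeasure = s :=
    s.toSignedMeasure_toJordanDecomposition
  have hmeas : P + ν₂ = ν₁ + N := by
    rw [← Measure.toSignedMeasure_eq_toSignedMeasure_iff, Measure.toSignedMeasure_add,
      Measure.toSignedMeasure_add, ← sub_eq_sub_iff_add_eq_add, hPN, hs]
  refine sub_eq_sub_iff_add_eq_add.mpr ?_
  rw [← integral_add_measure (hint P) (hint ν₂), ← integral_add_measure (hint ν₁) (hint N), hmeas]

theorem sInt_add (s t : SignedMeasure α) {f : α → E} (hf : StronglyMeasurable f) {C : ℝ}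
    (hfC : ∀ x, ‖f x‖ ≤ C) :
    sInt (s + t) f = sInt s f + sInt t f := by
  have hint (ν : Measure α) [IsFiniteMeasure ν] : Integrable f ν :=
    .of_bound hf.aestronglyMeasurable C (.of_forall hfC)
  set Ps := s.toJordanDecomposition.posPart
  set Ns := s.toJordanDecomposition.negPart
  set Pt := t.toJordanDecomposition.posPart
  set Nt := t.toJordanDecomposition.negPart
  have hst : s + t = (Ps + Pt).toSignedMeasure - (Ns + Nt).toSignedMeasure := by
    rw [Measure.toSignedMeasure_add, Measure.toSignedMeasure_add]
    conv_lhs => rw [← s.toSignedMeasure_toJordanDecomposition,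
      ← t.toSignedMeasure_toJordanDecomposition]
    simp only [JordanDecomposition.toSignedMeasure, Ps, Ns, Pt, Nt]
    abel
  rw [sInt_eq_integral_sub_integral _ _ hst hf hfC, integral_add_measure (hint Ps) (hint Pt),
    integral_add_measure (hint Ns) (hint Nt)]
  simp only [sInt, Ps, Ns, Pt, Nt]
  abel

theorem sInt_smul (c : ℝ) (s : SignedMeasure α) {f : α → E} (hf : StronglyMeasurable f) {C : ℝ}
    (hfC : ∀ x, ‖f x‖ ≤ C) :
    sInt (c • s) f = c • sInt s f := by
  set P := s.toJordanDecomposition.posPart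
  set N := s.toJordanDecomposition.negPart
  have hPN : P.toSignedMeasure - N.toSignedMeasure = s :=
    s.toSignedMeasure_toJordanDecomposition
  rcases le_or_gt 0 c with hc | hc
  · have hcs : c • s = (c.toNNReal • P).toSignedMeasure - (c.toNNReal • N).toSignedMeasure := by
      rw [Measure.toSignedMeasure_smul, Measure.toSignedMeasure_smul, NNReal.smul_def,
        NNReal.smul_def, Real.coe_toNNReal _ hc]
      conv_lhs => rw [← hPN]
      module
    rw [sInt_eq_integral_sub_integral _ _ hcs hf hfC, integral_smul_nnreal_measure,
      integral_smul_nnreal_measure, ← smul_sub, NNReal.smul_def, Real.coe_toNNReal _ hc]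
    rfl
  · have hc' : 0 ≤ -c := neg_nonneg.2 hc.le
    have hcs : c • s
        = ((-c).toNNReal • N).toSignedMeasure - ((-c).toNNReal • P).toSignedMeasure := by
      rw [Measure.toSignedMeasure_smul, Measure.toSignedMeasure_smul, NNReal.smul_def,
        NNReal.smul_def, Real.coe_toNNReal _ hc']
      conv_lhs => rw [← hPN]
      module
    rw [sInt_eq_integral_sub_integral _ _ hcs hf hfC, integral_smul_nnreal_measure,
      integral_smul_nnreal_measure, ← smul_sub, NNReal.smul_def, Real.coe_toNNReal _ hc',
      ← neg_sub, smul_neg, neg_smul, neg_neg]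
    rfl

theorem norm_sInt_le (s : SignedMeasure α) {f : α → E} {C : ℝ} (hfC : ∀ x, ‖f x‖ ≤ C) :
    ‖sInt s f‖ ≤ C * (s.toJordanDecomposition.posPart.real Set.univ
      + s.toJordanDecomposition.negPart.real Set.univ) := by
  rw [mul_add]
  exact (norm_sub_le _ _).trans (add_le_add (norm_integral_le_of_norm_le_const (.of_forall hfC))
    (norm_integral_le_of_norm_le_const (.of_forall hfC)))

theorem continuous_sInt {X : Type*} [TopologicalSpace X] [FirstCountableTopology X]
    (s : SignedMeasure α) {F : X → α → E} (hF : ∀ x, StronglyMeasurable (F x)) {C : ℝ}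
    (hFC : ∀ x a, ‖F x a‖ ≤ C) (hFcont : ∀ a, Continuous fun x => F x a) :
    Continuous fun x => sInt s (F x) := by
  have hcont (ν : Measure α) [IsFiniteMeasure ν] : Continuous fun x => ∫ a, F x a ∂ν :=
    continuous_of_dominated (fun x => (hF x).aestronglyMeasurable)
      (fun x => .of_forall (hFC x)) (integrable_const C) (.of_forall hFcont)
  exact (hcont _).sub (hcont _)

end SignedIntegral

theorem EuclideanSpace.norm_le_sqrt_card_mul {ι : Type*} [Fintype ι] {x : EuclideanSpace ℝ ι}
    {C : ℝ} (hC : 0 ≤ C) (hx : ∀ i, ‖x i‖ ≤ C) : ‖x‖ ≤ √(Fintype.card ι) * C := by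
  rw [EuclideanSpace.norm_eq, ← Real.sqrt_sq hC, ← Real.sqrt_mul (Nat.cast_nonneg _)]
  gcongr
  calc ∑ i, ‖x i‖ ^ 2 ≤ ∑ _i : ι, C ^ 2 := by gcongr with i; exact hx i
    _ = Fintype.card ι * C ^ 2 := by simp

theorem EuclideanSpace.sum_mul_eq_inner {ι : Type*} [Fintype ι] (a x : EuclideanSpace ℝ ι) :
    ∑ i, a i * x i = ⟪a, x⟫ := by
  simp [PiLp.inner_apply, mul_comm]

section Generator

variable {n k : ℕ} {σg : ℝ → ℝ}

theorem continuous_phi (hσg : Continuous σg) :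
    Continuous fun p : Par n k × EuclideanSpace ℝ (Fin k) => phi n k σg p.1 p.2 :=
  (PiLp.continuous_toLp 2 _).comp (continuous_pi fun i => hσg.comp (by fun_prop))

theorem norm_phi_le {M : ℝ} (hM : ∀ r, |σg r| ≤ M) (κ : Par n k) (z : EuclideanSpace ℝ (Fin k)) :
    ‖phi n k σg κ z‖ ≤ √n * M := by
  simpa using EuclideanSpace.norm_le_sqrt_card_mul (x := phi n k σg κ z)
    ((abs_nonneg _).trans (hM 0)) fun i => hM _

theorem stronglyMeasurable_phi (hσg : Continuous σg) (z : EuclideanSpace ℝ (Fin k)) :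
    StronglyMeasurable fun κ : Par n k => phi n k σg κ z :=
  ((continuous_phi hσg).comp (continuous_id.prodMk continuous_const)).stronglyMeasurable

theorem gen_add_smul (hσg : Continuous σg) {M : ℝ} (hM : ∀ r, |σg r| ≤ M)
    (θ μ : SignedMeasure (Par n k)) (c : ℝ) (z : EuclideanSpace ℝ (Fin k)) :
    gen n k σg (θ + c • μ) z = gen n k σg θ z + c • gen n k σg μ z := by
  have hm := stronglyMeasurable_phi (n := n) hσg z
  have hC := (norm_phi_le (n := n) hM · z)
  exact (sInt_add θ _ hm hC).trans (congrArg _ (sInt_smul c μ hm hC))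

theorem norm_gen_le {M : ℝ} (hM : ∀ r, |σg r| ≤ M) (θ : SignedMeasure (Par n k))
    (z : EuclideanSpace ℝ (Fin k)) :
    ‖gen n k σg θ z‖ ≤ √n * M * (θ.toJordanDecomposition.posPart.real Set.univ
      + θ.toJordanDecomposition.negPart.real Set.univ) :=
  norm_sInt_le θ (norm_phi_le hM · z)

theorem continuous_gen (hσg : Continuous σg) {M : ℝ} (hM : ∀ r, |σg r| ≤ M)
    (θ : SignedMeasure (Par n k)) : Continuous (gen n k σg θ) :=
  continuous_sInt θ (stronglyMeasurable_phi hσg) (fun z κ => norm_phi_le hM κ z)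
    fun _ => (continuous_phi hσg).comp (continuous_const.prodMk continuous_id)

end Generator

section Discriminator

variable {n Nd : ℕ} {σ : ℝ → ℝ} {a : Fin Nd → EuclideanSpace ℝ (Fin n)} {b : Fin Nd → ℝ}

def dPsi (n Nd : ℕ) (σ : ℝ → ℝ) (a : Fin Nd → EuclideanSpace ℝ (Fin n)) (b : Fin Nd → ℝ)
    (x v : EuclideanSpace ℝ (Fin n)) : EuclideanSpace ℝ (Fin Nd) :=
  WithLp.toLp 2 fun j => ⟪gradPsi n Nd σ a b j x, v⟫

theorem continuous_Psi (hσ : Continuous σ) : Continuous (Psi n Nd σ a b) :=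
  (PiLp.continuous_toLp 2 _).comp (continuous_pi fun j => hσ.comp (by fun_prop))

theorem norm_Psi_le {M : ℝ} (hM : ∀ t, |σ t| ≤ M) (x : EuclideanSpace ℝ (Fin n)) :
    ‖Psi n Nd σ a b x‖ ≤ √Nd * M := by
  simpa using EuclideanSpace.norm_le_sqrt_card_mul (x := Psi n Nd σ a b x)
    ((abs_nonneg _).trans (hM 0)) fun j => hM _

theorem continuous_dPsi (hσ' : Continuous (deriv σ)) :
    Continuous fun p : EuclideanSpace ℝ (Fin n) × EuclideanSpace ℝ (Fin n) =>
      dPsi n Nd σ a b p.1 p.2 := by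
  refine (PiLp.continuous_toLp 2 _).comp (continuous_pi fun j => Continuous.inner ?_ continuous_snd)
  exact (hσ'.comp (by fun_prop)).smul continuous_const

theorem norm_dPsi_le {M : ℝ} (hM : ∀ t, |deriv σ t| ≤ M) (x v : EuclideanSpace ℝ (Fin n)) :
    ‖dPsi n Nd σ a b x v‖ ≤ √Nd * (M * ∑ j, ‖a j‖) * ‖v‖ := by
  have hM0 : 0 ≤ M := (abs_nonneg _).trans (hM 0)
  have hcomp (j : Fin Nd) : ‖dPsi n Nd σ a b x v j‖ ≤ M * (∑ j, ‖a j‖) * ‖v‖ :=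
    calc ‖⟪gradPsi n Nd σ a b j x, v⟫‖ ≤ ‖gradPsi n Nd σ a b j x‖ * ‖v‖ := norm_inner_le_norm _ _
      _ ≤ M * (∑ j, ‖a j‖) * ‖v‖ := by
        rw [gradPsi, norm_smul]
        gcongr
        · exact hM _
        · exact Finset.single_le_sum (fun i _ => norm_nonneg (a i)) (Finset.mem_univ j)
  simpa [mul_assoc] using EuclideanSpace.norm_le_sqrt_card_mul (by positivity) hcomp

theorem inner_dPsi (r : EuclideanSpace ℝ (Fin Nd)) (x v : EuclideanSpace ℝ (Fin n)) :
    ⟪r, dPsi n Nd σ a b x v⟫ = ∑ j, r j * ⟪gradPsi n Nd σ a b j x, v⟫ := by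
  simp [dPsi, PiLp.inner_apply, mul_comm]

theorem hasDerivAt_Psi_comp_line (hσ : Differentiable ℝ σ) (x v : EuclideanSpace ℝ (Fin n))
    (t : ℝ) :
    HasDerivAt (fun l : ℝ => Psi n Nd σ a b (x + l • v)) (dPsi n Nd σ a b (x + t • v) v) t := by
  have hj (j : Fin Nd) : HasDerivAt (fun l : ℝ => σ (⟪a j, x⟫ + l * ⟪a j, v⟫ + b j))
      (deriv σ (⟪a j, x⟫ + t * ⟪a j, v⟫ + b j) * ⟪a j, v⟫) t := by
    have hlin := (((hasDerivAt_id t).mul_const ⟪a j, v⟫).const_add ⟪a j, x⟫).add_const (b j)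
    simpa [Function.comp_def] using (hσ _).hasDerivAt.comp t hlin
  have hline : (fun l : ℝ => Psi n Nd σ a b (x + l • v))
      = fun l => WithLp.toLp 2 fun j => σ (⟪a j, x⟫ + l * ⟪a j, v⟫ + b j) := by
    funext l
    simp only [Psi, EuclideanSpace.sum_mul_eq_inner, inner_add_right, inner_smul_right]
  rw [hline]
  refine ((PiLp.hasFDerivAt_toLp 2 _).comp_hasDerivAt t (hasDerivAt_pi.2 hj)).congr_deriv ?_
  ext j
  simp only [dPsi, gradPsi, EuclideanSpace.sum_mul_eq_inner, inner_add_right, inner_smul_right,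
    real_inner_smul_left]
  rfl

end Discriminator

theorem hasDerivAt_integral_smul_comp_add_smul {Z : Type*} [MeasurableSpace Z] {ν : Measure Z}
    {E F : Type*} [NormedAddCommGroup E] [NormedSpace ℝ E] [NormedAddCommGroup F]
    [NormedSpace ℝ F] {f : E → F} {f' : E → E → F} {C K V : ℝ}
    (hf : Continuous f) (hfC : ∀ x, ‖f x‖ ≤ C)
    (hf' : Continuous fun p : E × E => f' p.1 p.2) (hf'K : ∀ x w, ‖f' x w‖ ≤ K * ‖w‖)
    (hderiv : ∀ x w t, HasDerivAt (fun l : ℝ => f (x + l • w)) (f' (x + t • w) w) t)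
    {q : Z → ℝ} (hq : Integrable q ν) {u v : Z → E} (hu : AEStronglyMeasurable u ν)
    (hv : AEStronglyMeasurable v ν) (hvV : ∀ z, ‖v z‖ ≤ V) (t : ℝ) :
    Integrable (fun z => q z • f' (u z + t • v z) (v z)) ν ∧
      HasDerivAt (fun l => ∫ z, q z • f (u z + l • v z) ∂ν)
        (∫ z, q z • f' (u z + t • v z) (v z) ∂ν) t := by
  have hline (l : ℝ) : AEStronglyMeasurable (fun z => u z + l • v z) ν := hu.add (hv.const_smul l)
  have hf'bound (l : ℝ) (z : Z) : ‖q z • f' (u z + l • v z) (v z)‖ ≤ ‖q z‖ * (|K| * V) := by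
    rw [norm_smul]
    gcongr
    calc ‖f' (u z + l • v z) (v z)‖ ≤ K * ‖v z‖ := hf'K _ _
      _ ≤ |K| * ‖v z‖ := by gcongr; exact le_abs_self K
      _ ≤ |K| * V := by gcongr; exact hvV z
  refine hasDerivAt_integral_of_dominated_loc_of_deriv_le (s := Set.univ) univ_mem
    (.of_forall fun l => hq.aestronglyMeasurable.smul (hf.comp_aestronglyMeasurable (hline l)))
    ?_ (hq.aestronglyMeasurable.smul (hf'.comp_aestronglyMeasurable₂ (hline t) hv))
    (.of_forall fun z l _ => hf'bound l z) (hq.norm.mul_const _)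
    (.of_forall fun z l _ => (hderiv (u z) (v z) l).const_smul (q z))
  refine (hq.norm.mul_const C).mono'
    (hq.aestronglyMeasurable.smul (hf.comp_aestronglyMeasurable (hline t))) (.of_forall fun z => ?_)
  exact (norm_smul (q z) _).trans_le (mul_le_mul_of_nonneg_left (hfC _) (norm_nonneg _))

theorem HasDerivAt.half_norm_const_sub_sq {E : Type*} [NormedAddCommGroup E]
    [InnerProductSpace ℝ E] {I : ℝ → E} {I' : E} {t : ℝ} (hI : HasDerivAt I I' t) (c : E) :
    HasDerivAt (fun l => 1 / 2 * ‖c - I l‖ ^ 2) (-⟪c - I t, I'⟫) t := by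
  refine ((hI.const_sub c).norm_sq.const_mul (1 / 2)).congr_deriv ?_
  rw [inner_neg_right]
  ring

theorem wgan_loss_directional_derivative_general
    (n k Nd : ℕ)
    -- (AL): latent density
    (qZ : EuclideanSpace ℝ (Fin k) → ℝ)
    (hq_prob : ∫ z, qZ z = 1)
    -- (AG): generator activation
    (σg : ℝ → ℝ) (hσg_cont : Continuous σg)
    (hσg_bdd : ∃ M, ∀ r, |σg r| ≤ M)
    -- discriminator activation
    (σ : ℝ → ℝ) (hσ_diff : Differentiable ℝ σ) (hσ'_diff : Differentiable ℝ (deriv σ))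
    (hσ_bdd : ∃ M, ∀ t, |σ t| + |deriv σ t| + |deriv (deriv σ) t| ≤ M)
    (a : Fin Nd → EuclideanSpace ℝ (Fin n)) (b : Fin Nd → ℝ)
    -- true data distribution: any random vector X in ℝ^n
    (PX : Measure (EuclideanSpace ℝ (Fin n)))
    (θ μ : MeasureTheory.SignedMeasure (Par n k)) :
    (∀ t : ℝ,
      DifferentiableAt ℝ (fun lam : ℝ => Jloss n k Nd σg σ a b PX qZ (θ + lam • μ)) t) ∧
    HasDerivAt (fun lam : ℝ => Jloss n k Nd σg σ a b PX qZ (θ + lam • μ))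
      (-(∫ z, qZ z * ∑ j, resid n k Nd σg σ a b PX qZ θ j *
          ⟪gradPsi n Nd σ a b j (gen n k σg θ z), gen n k σg μ z⟫)) 0 := by
  obtain ⟨Mg, hMg⟩ := hσg_bdd
  obtain ⟨M, hM⟩ := hσ_bdd
  have hσM (t : ℝ) : |σ t| ≤ M := by
    linarith [hM t, abs_nonneg (deriv σ t), abs_nonneg (deriv (deriv σ) t)]
  have hσ'M (t : ℝ) : |deriv σ t| ≤ M := by
    linarith [hM t, abs_nonneg (σ t), abs_nonneg (deriv (deriv σ) t)]
  have hq : Integrable qZ := .of_integral_ne_zero (by rw [hq_prob]; exact one_ne_zero)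
  have hI (t : ℝ) := hasDerivAt_integral_smul_comp_add_smul (continuous_Psi hσ_diff.continuous)
    (norm_Psi_le (a := a) (b := b) hσM) (continuous_dPsi hσ'_diff.continuous) (norm_dPsi_le hσ'M)
    (hasDerivAt_Psi_comp_line hσ_diff) hq (continuous_gen hσg_cont hMg θ).aestronglyMeasurable
    (continuous_gen hσg_cont hMg μ).aestronglyMeasurable (norm_gen_le hMg μ) t
  have hJ (t : ℝ) := (hI t).2.half_norm_const_sub_sq (∫ x, Psi n Nd σ a b x ∂PX)
  have hline : (fun l : ℝ => Jloss n k Nd σg σ a b PX qZ (θ + l • μ)) = fun l =>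
      1 / 2 * ‖(∫ x, Psi n Nd σ a b x ∂PX)
        - ∫ z, qZ z • Psi n Nd σ a b (gen n k σg θ z + l • gen n k σg μ z)‖ ^ 2 := by
    funext l
    simp only [Jloss, resid, gen_add_smul hσg_cont hMg]
  rw [hline]
  refine ⟨fun t => (hJ t).differentiableAt, (hJ 0).congr_deriv ?_⟩
  rw [← integral_inner (hI 0).1]
  simp only [zero_smul, add_zero, inner_smul_right, inner_dPsi]
  rfl

/-- for any finite signed measures θ, μ, the map λ ↦ J(θ + λμ) is
differentiable on ℝ, and its derivative at λ = 0 equals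
−E_Z[∑_j r_j(θ) ∇ψ_j(g_θ(Z))ᵀ g_μ(Z)]. -/
theorem wgan_loss_directional_derivative
    (n k Nd : ℕ)
    -- (AL): latent density
    (qZ : EuclideanSpace ℝ (Fin k) → ℝ)
    (hq_lip : ∃ L : NNReal, LipschitzWith L qZ)
    (hq_pos : ∀ z, 0 < qZ z)
    (hq_prob : ∫ z, qZ z = 1)
    -- (AG): generator activation
    (σg : ℝ → ℝ) (hσg_cont : Continuous σg)
    (hσg_bdd : ∃ M, ∀ r, |σg r| ≤ M)
    (hσg_lim : ∃ l u : ℝ, Tendsto σg atBot (nhds l) ∧ Tendsto σg atTop (nhds u) ∧ l < u)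
    -- discriminator activation
    (σ : ℝ → ℝ) (hσ_diff : Differentiable ℝ σ) (hσ'_diff : Differentiable ℝ (deriv σ))
    (hσ'_pos : ∀ t, 0 < deriv σ t)
    (hσ_bdd : ∃ M, ∀ t, |σ t| + |deriv σ t| + |deriv (deriv σ) t| ≤ M)
    (a : Fin Nd → EuclideanSpace ℝ (Fin n)) (b : Fin Nd → ℝ)
    -- true data distribution: any random vector X in ℝ^n
    (PX : Measure (EuclideanSpace ℝ (Fin n))) (hPX : IsProbabilityMeasure PX)
    (θ μ : MeasureTheory.SignedMeasure (Par n k)) :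
    (∀ t : ℝ,
      DifferentiableAt ℝ (fun lam : ℝ => Jloss n k Nd σg σ a b PX qZ (θ + lam • μ)) t) ∧
    HasDerivAt (fun lam : ℝ => Jloss n k Nd σg σ a b PX qZ (θ + lam • μ))
      (-(∫ z, qZ z * ∑ j, resid n k Nd σg σ a b PX qZ θ j *
          ⟪gradPsi n Nd σ a b j (gen n k σg θ z), gen n k σg μ z⟫)) 0 :=
  wgan_loss_directional_derivative_general n k Nd qZ hq_prob σg hσg_cont hσg_bdd σ hσ_diff hσ'_diff
    hσ_bdd a b PX θ μ

end
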